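/- For m > 0 and T > 0, define G_m on the triangle {(t,s) : -t ≤ s ≤ t, t ∈ [0,T]} by G_m(t,s) = (cos(√m s)·csc(√m T)·cos(√m (t−T)) + sinh(√m s)·csch(√m T)·sinh(√m (t−T))) / (2√m), assuming √m T is not an integer multiple of π. Then G_m(t,t⁻) and G_m(t,t⁺) agree (G_m extends continuously across the diagonal) and ∂G_m/∂t(t,t⁻) − ∂G_m/∂t(t,t⁺) = 1 for t ∈ (0,T), where the off-triangle values are given by the symmetries G_m(t,s)=G_m(s,t)=G_m(-t,-s). -/

import Mathlib

/-! Near the diagonal point `(t, t)` with `0 < t`, `Gfull m T τ s` is `gpos m T τ s` for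
`|s| < τ` and `gpos m T s τ` for `|τ| < s`; both pieces are smooth and agree on the diagonal.
The jump of `∂G/∂t` across the diagonal is a difference of two Wronskian-type expressions,
which collapse by the subtraction formulas for `sin` and `sinh` to
`sinh (√m T) / (2 sinh (√m T)) + sin (√m T) / (2 sin (√m T)) = 1`. -/

/-- Explicit expression of the Green's function `G_m` (for `m > 0`) on the
triangle `{(t,s) : -t ≤ s ≤ t}`. -/
noncomputable def gpos (m T t s : ℝ) : ℝ :=
  (Real.cos (Real.sqrt m * s) * (1 / Real.sin (Real.sqrt m * T)) *
      Real.cos (Real.sqrt m * (t - T)) +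
    Real.sinh (Real.sqrt m * s) * (1 / Real.sinh (Real.sqrt m * T)) *
      Real.sinh (Real.sqrt m * (t - T))) / (2 * Real.sqrt m)

/-- Extension of `gpos` to the whole square by the symmetries
`G(t,s) = G(s,t) = G(-t,-s)`. -/
noncomputable def Gfull (m T t s : ℝ) : ℝ :=
  if |s| ≤ |t| then (if 0 ≤ t then gpos m T t s else gpos m T (-t) (-s))
  else (if 0 ≤ s then gpos m T s t else gpos m T (-s) (-t))

open Filter Topology

noncomputable def gposDerivFst (m T t s : ℝ) : ℝ :=
  (Real.sinh (Real.sqrt m * s) * Real.cosh (Real.sqrt m * (t - T)) / Real.sinh (Real.sqrt m * T) -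
    Real.cos (Real.sqrt m * s) * Real.sin (Real.sqrt m * (t - T)) / Real.sin (Real.sqrt m * T)) / 2

noncomputable def gposDerivSnd (m T t s : ℝ) : ℝ :=
  (Real.cosh (Real.sqrt m * s) * Real.sinh (Real.sqrt m * (t - T)) / Real.sinh (Real.sqrt m * T) -
    Real.sin (Real.sqrt m * s) * Real.cos (Real.sqrt m * (t - T)) / Real.sin (Real.sqrt m * T)) / 2

section

variable {m : ℝ} (T : ℝ)

lemma hasDerivAt_gpos_fst (hm : 0 < m) (s t : ℝ) :
    HasDerivAt (fun τ => gpos m T τ s) (gposDerivFst m T t s) t := by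
  have hc : Real.sqrt m ≠ 0 := (Real.sqrt_pos.mpr hm).ne'
  have hlin : HasDerivAt (fun τ : ℝ => Real.sqrt m * (τ - T)) (Real.sqrt m) t := by
    simpa using ((hasDerivAt_id t).sub_const T).const_mul (Real.sqrt m)
  have hcos := ((Real.hasDerivAt_cos _).comp t hlin).const_mul
    (Real.cos (Real.sqrt m * s) * (1 / Real.sin (Real.sqrt m * T)))
  have hsinh := ((Real.hasDerivAt_sinh _).comp t hlin).const_mul
    (Real.sinh (Real.sqrt m * s) * (1 / Real.sinh (Real.sqrt m * T)))
  refine ((hcos.add hsinh).div_const (2 * Real.sqrt m)).congr_deriv ?_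
  unfold gposDerivFst
  field_simp
  ring

lemma hasDerivAt_gpos_snd (hm : 0 < m) (t s : ℝ) :
    HasDerivAt (fun σ => gpos m T t σ) (gposDerivSnd m T t s) s := by
  have hc : Real.sqrt m ≠ 0 := (Real.sqrt_pos.mpr hm).ne'
  have hlin : HasDerivAt (fun σ : ℝ => Real.sqrt m * σ) (Real.sqrt m) s := by
    simpa using (hasDerivAt_id s).const_mul (Real.sqrt m)
  have hcos := (((Real.hasDerivAt_cos _).comp s hlin).mul_const
    (1 / Real.sin (Real.sqrt m * T))).mul_const (Real.cos (Real.sqrt m * (t - T)))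
  have hsinh := (((Real.hasDerivAt_sinh _).comp s hlin).mul_const
    (1 / Real.sinh (Real.sqrt m * T))).mul_const (Real.sinh (Real.sqrt m * (t - T)))
  refine ((hcos.add hsinh).div_const (2 * Real.sqrt m)).congr_deriv ?_
  unfold gposDerivSnd
  field_simp
  ring

lemma gposDerivFst_self_sub_gposDerivSnd_self (t : ℝ)
    (hsin : Real.sin (Real.sqrt m * T) ≠ 0) (hsinh : Real.sinh (Real.sqrt m * T) ≠ 0) :
    gposDerivFst m T t t - gposDerivSnd m T t t = 1 := by
  have hsinh_sub : Real.sinh (Real.sqrt m * t) * Real.cosh (Real.sqrt m * (t - T)) -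
      Real.cosh (Real.sqrt m * t) * Real.sinh (Real.sqrt m * (t - T)) =
      Real.sinh (Real.sqrt m * T) := by
    rw [← Real.sinh_sub]; ring_nf
  have hsin_sub : Real.sin (Real.sqrt m * t) * Real.cos (Real.sqrt m * (t - T)) -
      Real.cos (Real.sqrt m * t) * Real.sin (Real.sqrt m * (t - T)) =
      Real.sin (Real.sqrt m * T) := by
    rw [← Real.sin_sub]; ring_nf
  unfold gposDerivFst gposDerivSnd
  field_simp
  linear_combination Real.sin (Real.sqrt m * T) * hsinh_sub +
    Real.sinh (Real.sqrt m * T) * hsin_sub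

variable {t s : ℝ}

lemma Gfull_eq_gpos (h : |s| ≤ t) : Gfull m T t s = gpos m T t s := by
  have ht : 0 ≤ t := (abs_nonneg s).trans h
  simp [Gfull, abs_of_nonneg ht, h, ht]

lemma Gfull_eq_gpos_swap (h : |t| ≤ s) : Gfull m T t s = gpos m T s t := by
  have hs : 0 ≤ s := (abs_nonneg t).trans h
  unfold Gfull
  rw [abs_of_nonneg hs]
  split_ifs with hst ht
  · rw [abs_of_nonneg ht] at h hst
    obtain rfl : s = t := le_antisymm hst h
    rfl
  · rw [abs_of_neg (not_le.mp ht)] at h hst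
    obtain rfl : s = -t := le_antisymm hst h
    rw [neg_neg]
  · rfl

lemma continuousAt_Gfull_diag (ht : 0 < t) : ContinuousAt (Gfull m T t) t := by
  rw [continuousAt_iff_continuous_left_right]
  constructor
  · refine ContinuousWithinAt.congr_of_eventuallyEq_of_mem
      (f := fun s => gpos m T t s) (by unfold gpos; fun_prop) ?_ (le_refl t)
    filter_upwards [Ioc_mem_nhdsLE (neg_lt_self ht)] with s hs
    exact Gfull_eq_gpos T (abs_le.mpr ⟨hs.1.le, hs.2⟩)
  · refine ContinuousWithinAt.congr_of_eventuallyEq_of_mem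
      (f := fun s => gpos m T s t) (by unfold gpos; fun_prop) ?_ (le_refl t)
    filter_upwards [self_mem_nhdsWithin] with s hs
    exact Gfull_eq_gpos_swap T ((abs_of_pos ht).trans_le hs)

lemma hasDerivAt_Gfull_of_abs_lt (hm : 0 < m) (h : |s| < t) :
    HasDerivAt (fun τ => Gfull m T τ s) (gposDerivFst m T t s) t := by
  refine (hasDerivAt_gpos_fst T hm s t).congr_of_eventuallyEq ?_
  filter_upwards [eventually_gt_nhds h] with τ hτ
  exact Gfull_eq_gpos T hτ.le

lemma hasDerivAt_Gfull_of_abs_lt_swap (hm : 0 < m) (h : |t| < s) :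
    HasDerivAt (fun τ => Gfull m T τ s) (gposDerivSnd m T s t) t := by
  refine (hasDerivAt_gpos_snd T hm s t).congr_of_eventuallyEq ?_
  filter_upwards [continuous_abs.continuousAt.eventually_lt continuousAt_const h] with τ hτ
  exact Gfull_eq_gpos_swap T hτ.le

lemma tendsto_deriv_Gfull_nhdsLT (hm : 0 < m) (ht : 0 < t) :
    Tendsto (fun s => deriv (fun τ => Gfull m T τ s) t) (𝓝[<] t)
      (𝓝 (gposDerivFst m T t t)) := by
  have hcont : Continuous (gposDerivFst m T t) := by unfold gposDerivFst; fun_prop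
  refine ((hcont.tendsto t).mono_left nhdsWithin_le_nhds).congr' ?_
  filter_upwards [Ioo_mem_nhdsLT (neg_lt_self ht)] with s hs
  exact ((hasDerivAt_Gfull_of_abs_lt T hm (abs_lt.mpr hs)).deriv).symm

lemma tendsto_deriv_Gfull_nhdsGT (hm : 0 < m) (ht : 0 ≤ t) :
    Tendsto (fun s => deriv (fun τ => Gfull m T τ s) t) (𝓝[>] t)
      (𝓝 (gposDerivSnd m T t t)) := by
  have hcont : Continuous (fun s => gposDerivSnd m T s t) := by unfold gposDerivSnd; fun_prop
  refine ((hcont.tendsto t).mono_left nhdsWithin_le_nhds).congr' ?_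
  filter_upwards [self_mem_nhdsWithin] with s hs
  exact ((hasDerivAt_Gfull_of_abs_lt_swap T hm ((abs_of_nonneg ht).trans_lt hs)).deriv).symm

end

theorem stmt5 (m T : ℝ) (hm : 0 < m) (hT : 0 < T)
    (hres : ∀ k : ℤ, Real.sqrt m * T ≠ k * Real.pi) :
    ∀ t ∈ Set.Ioo 0 T,
      ContinuousAt (fun s => Gfull m T t s) t ∧
      ∃ A B : ℝ,
        Filter.Tendsto (fun s => deriv (fun τ => Gfull m T τ s) t)
          (nhdsWithin t (Set.Iio t)) (nhds A) ∧
        Filter.Tendsto (fun s => deriv (fun τ => Gfull m T τ s) t)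
          (nhdsWithin t (Set.Ioi t)) (nhds B) ∧
        A - B = 1 := by
  rintro t ⟨ht, -⟩
  have hsin : Real.sin (Real.sqrt m * T) ≠ 0 :=
    Real.sin_ne_zero_iff.mpr fun k hk => hres k hk.symm
  have hsinh : Real.sinh (Real.sqrt m * T) ≠ 0 :=
    (Real.sinh_pos_iff.mpr (mul_pos (Real.sqrt_pos.mpr hm) hT)).ne'
  exact ⟨continuousAt_Gfull_diag T ht, _, _, tendsto_deriv_Gfull_nhdsLT T hm ht,
    tendsto_deriv_Gfull_nhdsGT T hm ht.le, gposDerivFst_self_sub_gposDerivSnd_self T t hsin hsinh⟩
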